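/- arXiv:2411.08084 — 4 statements merged into one kernel-verified Lean document; each statement's English description precedes it below -/
import Mathlib

section
/- Let f be the Collatz map, H a complex Hilbert space with orthonormal basis {e_n}_{n≥1}, and T the unique bounded operator on H with T e_n = e_{f(n)}. If there exists n ≥ 1 such that e_n is a cyclic vector for C*(T), then the Collatz conjecture holds, i.e. 1 ∈ orb(m;f) for every m ≥ 1. -/
/-- The Collatz map on positive integers: `3n+1` for odd `n`, `n/2` for even `n`. -/
def collatz (n : ℕ+) : ℕ+ :=
  if h : (n : ℕ) % 2 = 1 then 3 * n + 1
  else ⟨(n : ℕ) / 2, by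
    have h2 : 0 < n.1 := n.2
    have h3 : ¬ n.1 % 2 = 1 := h
    show 0 < n.1 / 2
    omega⟩

/-- The forward orbit of `x` under `f`. -/
def orbit {X : Type*} (f : X → X) (x : X) : Set X := Set.range fun k => f^[k] x

/-- The orbit equivalence relation induced by `f`: `x ~ y` iff the orbits meet. -/
def orbEquiv {X : Type*} (f : X → X) (x y : X) : Prop :=
  (orbit f x ∩ orbit f y).Nonempty

/-- The C*-algebra of operators generated by a set `S` of bounded operators on a complex
Hilbert space: the closure of the (non-unital) star subalgebra generated by `S`. -/
noncomputable def CstarGen {H : Type*} [NormedAddCommGroup H] [InnerProductSpace ℂ H]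
    [CompleteSpace H] (S : Set (H →L[ℂ] H)) : Set (H →L[ℂ] H) :=
  closure (NonUnitalStarAlgebra.adjoin ℂ S : Set (H →L[ℂ] H))

/-!
The set `s` of points whose Collatz orbit reaches the cycle `1 → 4 → 2 → 1` satisfies
`f⁻¹(s) = s`. For any such `s`, the closed span `K` of `{eₘ : m ∈ s}` has orthogonal complement
the closed span of `{eₘ : m ∉ s}`, so `K` and `Kᗮ` are both `T`-invariant. The projection onto `K`
then commutes with `T` and `T*`, hence with all of `C*(T)`, so `K` and `Kᗮ` are invariant under
`C*(T)`. A cyclic vector `eₙ` lies in one of them, which must then be everything: `s` is empty or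
everything, and `1 ∈ s`.
-/

open Function Set Submodule Module.End

lemma Function.IsPeriodicPt.preimage_setOf_mem_orbit {X : Type*} {f : X → X} {x : X} {k : ℕ}
    (hx : IsPeriodicPt f k x) (hk : 0 < k) :
    f ⁻¹' {y | x ∈ orbit f y} = {y | x ∈ orbit f y} := by
  ext y
  constructor
  · rintro ⟨j, hj⟩
    exact ⟨j + 1, (iterate_succ_apply f j y).trans hj⟩
  · rintro ⟨j, rfl⟩
    refine ⟨k - 1 + j, ?_⟩
    change f^[k - 1 + j] (f y) = f^[j] y
    rw [← iterate_succ_apply, show (k - 1 + j).succ = k + j by omega, iterate_add_apply, hx.eq]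

lemma isPeriodicPt_collatz_one : IsPeriodicPt collatz 3 1 := by decide

section HilbertBasis

variable {ι 𝕜 E : Type*} [RCLike 𝕜] [NormedAddCommGroup E] [InnerProductSpace 𝕜 E]
  (b : HilbertBasis ι 𝕜 E)

theorem HilbertBasis.orthogonal_span_image [CompleteSpace E] (s : Set ι) :
    (span 𝕜 (b '' s))ᗮ = (span 𝕜 (b '' sᶜ)).topologicalClosure := by
  set U := span 𝕜 (b '' s)
  set V := span 𝕜 (b '' sᶜ)
  have hVU : V ≤ Uᗮ := isOrtho_iff_le.1 <| isOrtho_span.2 <| by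
    rintro _ ⟨i, hi, rfl⟩ _ ⟨j, hj, rfl⟩
    exact b.orthonormal.2 fun h => hi (h ▸ hj)
  have hbot : Vᗮ ⊓ Uᗮ = ⊥ := by
    rw [inf_orthogonal, ← span_union, ← image_union, compl_union_self, image_univ,
      ← orthogonal_closure, b.dense_span, top_orthogonal_eq_bot]
  calc Uᗮ = V.topologicalClosure ⊔ V.topologicalClosureᗮ ⊓ Uᗮ :=
        (sup_orthogonal_inf_of_hasOrthogonalProjection
          (topologicalClosure_minimal _ hVU (isClosed_orthogonal U))).symm
    _ = V.topologicalClosure := by rw [orthogonal_closure, hbot, sup_bot_eq]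

theorem HilbertBasis.mem_of_apply_mem_closure_span_image [CompleteSpace E] {s : Set ι} {i : ι}
    (hi : b i ∈ (span 𝕜 (b '' s)).topologicalClosure) : i ∈ s := by
  by_contra his
  have hi' : b i ∈ (span 𝕜 (b '' s)).topologicalClosureᗮ := by
    rw [orthogonal_closure, b.orthogonal_span_image]
    exact le_topologicalClosure _ (subset_span ⟨i, his, rfl⟩)
  exact b.orthonormal.ne_zero i (by simpa using inner_right_of_mem_orthogonal hi hi')

theorem HilbertBasis.closure_span_image_mem_invtSubmodule {f : ι → ι} {T : E →L[𝕜] E}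
    (hT : ∀ i, T (b i) = b (f i)) {s : Set ι} (hs : MapsTo f s s) :
    (span 𝕜 (b '' s)).topologicalClosure ∈ invtSubmodule T := by
  refine topologicalClosure_mem_invtSubmodule ((mem_invtSubmodule _).2 (span_le.2 ?_))
  rintro _ ⟨i, hi, rfl⟩
  exact subset_span ⟨f i, hs hi, (hT i).symm⟩

end HilbertBasis

theorem Submodule.commute_starProjection_iff {𝕜 E : Type*} [RCLike 𝕜] [NormedAddCommGroup E]
    [InnerProductSpace 𝕜 E] (K : Submodule 𝕜 E) [K.HasOrthogonalProjection] {T : E →L[𝕜] E} :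
    Commute K.starProjection T ↔ K ∈ invtSubmodule T ∧ Kᗮ ∈ invtSubmodule T := by
  simpa using
    ContinuousLinearMap.IsIdempotentElem.commute_iff (T := T) K.isIdempotentElem_starProjection

def IsCyclicVector {R E : Type*} [Semiring R] [TopologicalSpace E] [AddCommMonoid E] [Module R E]
    (S : Set (E →L[R] E)) (x : E) : Prop :=
  closure ((fun A => A x) '' S) = Set.univ

section Cstar

variable {H : Type*} [NormedAddCommGroup H] [InnerProductSpace ℂ H] [CompleteSpace H]

theorem Submodule.mem_invtSubmodule_of_mem_cstarGen (K : Submodule ℂ H)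
    [K.HasOrthogonalProjection] {T A : H →L[ℂ] H} (hK : K ∈ invtSubmodule T)
    (hK' : Kᗮ ∈ invtSubmodule T) (hA : A ∈ CstarGen {T}) : K ∈ invtSubmodule A := by
  have hT : Commute K.starProjection T := K.commute_starProjection_iff.2 ⟨hK, hK'⟩
  have hP : K.starProjection ∈ NonUnitalStarSubalgebra.centralizer ℂ {T} := by
    rw [NonUnitalStarSubalgebra.mem_centralizer_iff]
    rintro _ rfl
    refine ⟨hT.eq.symm, ?_⟩
    simpa [(isSelfAdjoint_starProjection K).star_eq] using hT.star_star.eq.symm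
  have hPA : Commute K.starProjection A := ((NonUnitalStarSubalgebra.mem_centralizer_iff ℂ).1
    (NonUnitalStarSubalgebra.topologicalClosure_adjoin_le_centralizer_centralizer ℂ {T} hA) _ hP).1
  simpa using (K.commute_starProjection_iff.1 hPA).1

theorem Submodule.eq_top_of_isCyclicVector (K : Submodule ℂ H) [CompleteSpace K]
    {T : H →L[ℂ] H} {x : H} (hx : IsCyclicVector (CstarGen {T}) x) (hK : K ∈ invtSubmodule T)
    (hK' : Kᗮ ∈ invtSubmodule T) (hxK : x ∈ K) : K = ⊤ := by
  have hsub : (fun A => A x) '' CstarGen {T} ⊆ K := by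
    rintro _ ⟨A, hA, rfl⟩
    exact K.mem_invtSubmodule_of_mem_cstarGen hK hK' hA hxK
  have hKc : IsClosed (K : Set H) := (completeSpace_coe_iff_isComplete.1 ‹_›).isClosed
  exact eq_top_iff'.2 fun y => hKc.closure_subset_iff.2 hsub (hx ▸ mem_univ y)

theorem HilbertBasis.eq_univ_of_isCyclicVector {ι : Type*} (b : HilbertBasis ι ℂ H) {f : ι → ι}
    {T : H →L[ℂ] H} (hT : ∀ i, T (b i) = b (f i)) {n : ι}
    (hn : IsCyclicVector (CstarGen {T}) (b n)) {s : Set ι} (hs : f ⁻¹' s = s) (hns : n ∈ s) :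
    s = univ := by
  set K := (span ℂ (b '' s)).topologicalClosure
  have hK : K ∈ invtSubmodule T :=
    b.closure_span_image_mem_invtSubmodule hT (mapsTo_iff_subset_preimage.2 hs.ge)
  have hK' : Kᗮ ∈ invtSubmodule T := by
    rw [orthogonal_closure, b.orthogonal_span_image]
    exact b.closure_span_image_mem_invtSubmodule hT
      (mapsTo_iff_subset_preimage.2 (by rw [preimage_compl, hs]))
  have hKtop : K = ⊤ :=
    K.eq_top_of_isCyclicVector hn hK hK' (le_topologicalClosure _ (subset_span ⟨n, hns, rfl⟩))
  exact eq_univ_of_forall fun i =>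
    b.mem_of_apply_mem_closure_span_image (hKtop.symm ▸ mem_top : b i ∈ K)

theorem HilbertBasis.eq_empty_or_eq_univ_of_isCyclicVector {ι : Type*} (b : HilbertBasis ι ℂ H)
    {f : ι → ι} {T : H →L[ℂ] H} (hT : ∀ i, T (b i) = b (f i)) {n : ι}
    (hn : IsCyclicVector (CstarGen {T}) (b n)) {s : Set ι} (hs : f ⁻¹' s = s) :
    s = ∅ ∨ s = univ := by
  by_cases hns : n ∈ s
  · exact Or.inr (b.eq_univ_of_isCyclicVector hT hn hs hns)
  · refine Or.inl (compl_univ_iff.1 (b.eq_univ_of_isCyclicVector hT hn (s := sᶜ) ?_ hns))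
    rw [preimage_compl, hs]

end Cstar

/-- If some basis vector `eₙ` is cyclic for `C*(T)`, the Collatz conjecture holds. -/
theorem collatz_of_cyclic_single {H : Type*} [NormedAddCommGroup H] [InnerProductSpace ℂ H]
    [CompleteSpace H] (b : HilbertBasis ℕ+ ℂ H)
    (T : H →L[ℂ] H) (hT : ∀ n : ℕ+, T (b n) = b (collatz n))
    (hcyc : ∃ n : ℕ+, closure ((fun A => A (b n)) '' CstarGen {T}) = Set.univ) :
    ∀ m : ℕ+, (1 : ℕ+) ∈ orbit collatz m := by
  obtain ⟨n, hn⟩ := hcyc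
  rcases b.eq_empty_or_eq_univ_of_isCyclicVector hT hn
      (isPeriodicPt_collatz_one.preimage_setOf_mem_orbit three_pos) with h | h
  · exact absurd h (nonempty_iff_ne_empty.1 ⟨1, 0, rfl⟩)
  · exact eq_univ_iff_forall.1 h
end

section
/- Let f be the Collatz map, H a complex Hilbert space with orthonormal basis {e_n}_{n≥1}, and T1, T2 the bounded operators with T1 e_n = e_{3n+1} for n odd, T1 e_n = 0 for n even, T2 e_n = e_{n/2} for n even, T2 e_n = 0 for n odd. Then for every n ≥ 1, the closure of C*(T1,T2)·e_n equals the closed linear span of {e_m : m ∈ ℕ≥1, m ~ n}, where ~ is the orbit equivalence relation induced by f. -/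
open Set Submodule

section orbEquiv

variable {X : Type*} {f : X → X} {x y : X}

theorem orbEquiv_iff : orbEquiv f x y ↔ ∃ i j, f^[i] x = f^[j] y := by
  simp [orbEquiv, orbit, Set.Nonempty, eq_comm]

theorem orbEquiv_refl (f : X → X) (x : X) : orbEquiv f x x :=
  orbEquiv_iff.2 ⟨0, 0, rfl⟩

theorem orbEquiv.symm (h : orbEquiv f x y) : orbEquiv f y x :=
  let ⟨i, j, h⟩ := orbEquiv_iff.1 h
  orbEquiv_iff.2 ⟨j, i, h.symm⟩

theorem orbEquiv_apply_left_iff : orbEquiv f (f x) y ↔ orbEquiv f x y := by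
  simp only [orbEquiv_iff]
  constructor
  · rintro ⟨i, j, h⟩
    exact ⟨i + 1, j, by rwa [Function.iterate_succ_apply]⟩
  · rintro ⟨i, j, h⟩
    exact ⟨i, j + 1, by
      rw [← Function.iterate_succ_apply, Function.iterate_succ_apply', h,
        Function.iterate_succ_apply']⟩

end orbEquiv

theorem collatz_of_odd {n : ℕ+} (h : (n : ℕ) % 2 = 1) : collatz n = 3 * n + 1 :=
  dif_pos h

theorem coe_collatz_of_even {n : ℕ+} (h : (n : ℕ) % 2 = 0) : (collatz n : ℕ) = n / 2 :=
  congrArg PNat.val (dif_neg (by omega) : collatz n = _)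

theorem two_mul_collatz_of_even {n : ℕ+} (h : (n : ℕ) % 2 = 0) : 2 * collatz n = n := by
  apply PNat.coe_injective
  rw [PNat.mul_coe, coe_collatz_of_even h, PNat.val_ofNat]
  omega

theorem collatz_injOn_odd : InjOn collatz {n : ℕ+ | (n : ℕ) % 2 = 1} := by
  intro m hm n hn h
  rw [collatz_of_odd hm, collatz_of_odd hn] at h
  apply PNat.coe_injective
  have := congrArg PNat.val h
  simp only [PNat.add_coe, PNat.mul_coe, PNat.val_ofNat] at this
  omega

theorem collatz_injOn_even : InjOn collatz {n : ℕ+ | (n : ℕ) % 2 = 0} := fun m hm n hn h => by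
  rw [← two_mul_collatz_of_even hm, ← two_mul_collatz_of_even hn, h]

section ShiftOperators

variable {ι 𝕜 E : Type*} [RCLike 𝕜] [NormedAddCommGroup E] [InnerProductSpace 𝕜 E]

variable (𝕜) in
def orbitSpan (b : ι → E) (f : ι → ι) (y : ι) : Submodule 𝕜 E :=
  (span 𝕜 (b '' {i | orbEquiv f i y})).topologicalClosure

def MovesAlongOrbits (b : ι → E) (f : ι → ι) (A : E →L[𝕜] E) : Prop :=
  ∀ i, A (b i) = 0 ∨ ∃ j, (f i = j ∨ f j = i) ∧ A (b i) = b j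

theorem MovesAlongOrbits.mapsTo_orbitSpan {b : ι → E} {f : ι → ι} {A : E →L[𝕜] E}
    (hA : MovesAlongOrbits b f A) (y : ι) : MapsTo A (orbitSpan 𝕜 b f y) (orbitSpan 𝕜 b f y) := by
  have hbasis : ∀ i, orbEquiv f i y → A (b i) ∈ orbitSpan 𝕜 b f y := by
    intro i hi
    rcases hA i with h | ⟨j, hij, h⟩
    · rw [h]
      exact zero_mem _
    · rw [h]
      refine le_topologicalClosure _ (subset_span ⟨j, ?_, rfl⟩)
      rcases hij with rfl | rfl
      · exact orbEquiv_apply_left_iff.2 hi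
      · exact orbEquiv_apply_left_iff.1 hi
  have hspan : span 𝕜 (b '' {i | orbEquiv f i y}) ≤ (orbitSpan 𝕜 b f y).comap A :=
    span_le.2 <| by
      rintro _ ⟨i, hi, rfl⟩
      exact hbasis i hi
  exact topologicalClosure_minimal _ hspan
    ((isClosed_topologicalClosure _).preimage A.continuous)

theorem movesAlongOrbits_of_apply_eq_ite {b : ι → E} {f : ι → ι} {T : E →L[𝕜] E} {p : ι → Prop}
    [DecidablePred p] (hT : ∀ i, T (b i) = if p i then b (f i) else 0) :
    MovesAlongOrbits b f T := by
  intro i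
  rw [hT i]
  split_ifs
  exacts [Or.inr ⟨f i, Or.inl rfl, rfl⟩, Or.inl rfl]

theorem exists_mem_apply_eq_of_orbEquiv {σ : Type*} [SetLike σ (E →L[𝕜] E)]
    [MulMemClass σ (E →L[𝕜] E)] {s : σ} {b : ι → E} {f : ι → ι}
    (hfwd : ∃ A ∈ s, ∀ i, A (b i) = b (f i)) (hbwd : ∀ i, ∃ A ∈ s, A (b (f i)) = b i)
    {x y : ι} (h : orbEquiv f x y) : ∃ A ∈ s, A (b x) = b y := by
  let R x y := ∃ A ∈ s, A (b x) = b y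
  have trans : ∀ {x y z}, R x y → R y z → R x z := fun ⟨A, hA, hAx⟩ ⟨B, hB, hBy⟩ =>
    ⟨B * A, mul_mem hB hA, by rw [mul_apply_eq_comp, hAx, hBy]⟩
  obtain ⟨F, hF, hFb⟩ := hfwd
  have step x : R x (f x) := ⟨F, hF, hFb x⟩
  have fwd : ∀ k x, R x (f^[k] x) := by
    intro k
    induction k with
    | zero => exact fun x => trans (step x) (hbwd x)
    | succ k ih => exact fun x => Function.iterate_succ_apply' f k x ▸ trans (ih x) (step _)
  have bwd : ∀ k x, R (f^[k] x) x := by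
    intro k
    induction k with
    | zero => exact fun x => trans (step x) (hbwd x)
    | succ k ih => exact fun x => trans (ih (f x)) (hbwd x)
  obtain ⟨i, j, hij⟩ := orbEquiv_iff.1 h
  exact trans (fwd i x) (hij ▸ bwd j y)

variable [CompleteSpace E]

theorem mapsTo_of_mem_adjoin {S : Set (E →L[𝕜] E)} {V : Submodule 𝕜 E}
    (hS : ∀ s ∈ S, MapsTo s V V ∧ MapsTo ⇑(star s) V V) {A : E →L[𝕜] E}
    (hA : A ∈ NonUnitalStarAlgebra.adjoin 𝕜 S) : MapsTo A V V ∧ MapsTo ⇑(star A) V V := by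
  induction hA using NonUnitalStarAlgebra.adjoin_induction with
  | mem s hs => exact hS s hs
  | add A B _ _ hA hB =>
    rw [star_add]
    exact ⟨fun x hx => add_mem (hA.1 hx) (hB.1 hx), fun x hx => add_mem (hA.2 hx) (hB.2 hx)⟩
  | zero =>
    rw [star_zero]
    exact ⟨fun _ _ => zero_mem V, fun _ _ => zero_mem V⟩
  | mul A B _ _ hA hB =>
    rw [star_mul]
    exact ⟨hA.1.comp hB.1, hB.2.comp hA.2⟩
  | smul c A _ hA =>
    rw [star_smul]
    exact ⟨fun x hx => V.smul_mem c (hA.1 hx), fun x hx => V.smul_mem _ (hA.2 hx)⟩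
  | star A _ hA =>
    rw [star_star]
    exact hA.symm

theorem HilbertBasis.star_apply_eq_of_inner (b : HilbertBasis ι 𝕜 E) {T : E →L[𝕜] E} {j : ι}
    {v : E} (h : ∀ i, inner 𝕜 (T (b i)) (b j) = inner 𝕜 (b i) v) : star T (b j) = v := by
  apply b.repr.injective
  ext i
  rw [b.repr_apply_apply, b.repr_apply_apply, ContinuousLinearMap.star_eq_adjoint,
    ContinuousLinearMap.adjoint_inner_right, h]

variable (b : HilbertBasis ι 𝕜 E) {T : E →L[𝕜] E} {p : ι → Prop} [DecidablePred p] {f : ι → ι}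

theorem HilbertBasis.star_apply_eq_of_apply_eq_ite
    (hT : ∀ i, T (b i) = if p i then b (f i) else 0) (hf : InjOn f {i | p i}) {i : ι}
    (hi : p i) : star T (b (f i)) = b i := by
  classical
  have hb := orthonormal_iff_ite.1 b.orthonormal
  refine b.star_apply_eq_of_inner fun k => ?_
  rw [hT k, hb]
  by_cases hk : p k
  · simp only [if_pos hk, hb, hf.eq_iff hk hi]
  · rw [if_neg hk, inner_zero_left, if_neg (by rintro rfl; exact hk hi)]

theorem HilbertBasis.star_apply_eq_zero_of_apply_eq_ite
    (hT : ∀ i, T (b i) = if p i then b (f i) else 0) {j : ι} (hj : ∀ i, p i → f i ≠ j) :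
    star T (b j) = 0 := by
  classical
  have hb := orthonormal_iff_ite.1 b.orthonormal
  refine b.star_apply_eq_of_inner fun k => ?_
  rw [hT k, inner_zero_right]
  split_ifs with hk
  · rw [hb, if_neg (hj k hk)]
  · exact inner_zero_left _

theorem HilbertBasis.movesAlongOrbits_star (hT : ∀ i, T (b i) = if p i then b (f i) else 0)
    (hf : InjOn f {i | p i}) : MovesAlongOrbits b f (star T) := by
  intro j
  by_cases hj : ∃ i, p i ∧ f i = j
  · obtain ⟨i, hi, rfl⟩ := hj
    exact Or.inr ⟨i, Or.inr rfl, b.star_apply_eq_of_apply_eq_ite hT hf hi⟩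
  · push Not at hj
    exact Or.inl (b.star_apply_eq_zero_of_apply_eq_ite hT hj)

end ShiftOperators

theorem mapsTo_of_mem_cstarGen {H : Type*} [NormedAddCommGroup H] [InnerProductSpace ℂ H]
    [CompleteSpace H] {S : Set (H →L[ℂ] H)} {V : Submodule ℂ H} (hV : IsClosed (V : Set H))
    (hS : ∀ s ∈ S, MapsTo s V V ∧ MapsTo ⇑(star s) V V) {A : H →L[ℂ] H} (hA : A ∈ CstarGen S) :
    MapsTo A V V := by
  have hclosed : IsClosed {A : H →L[ℂ] H | MapsTo A V V} := by
    simp only [MapsTo, ofPred_forall]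
    exact isClosed_iInter fun x => isClosed_iInter fun _ => hV.preimage (continuous_eval_const x)
  exact closure_minimal (fun B hB => (mapsTo_of_mem_adjoin hS hB).1) hclosed hA

/-- For every `n`, the closure of `C*(T₁,T₂)·eₙ` equals the closed linear span of
`{eₘ : m ~ n}`, where `~` is the orbit equivalence relation induced by the Collatz map. -/
theorem cstar_pair_orbit_span {H : Type*} [NormedAddCommGroup H] [InnerProductSpace ℂ H]
    [CompleteSpace H] (b : HilbertBasis ℕ+ ℂ H)
    (T1 T2 : H →L[ℂ] H)
    (hT1 : ∀ n : ℕ+, T1 (b n) = if (n : ℕ) % 2 = 1 then b (3 * n + 1) else 0)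
    (hT2 : ∀ n : ℕ+, T2 (b n) = if (n : ℕ) % 2 = 0 then b (collatz n) else 0)
    (n : ℕ+) :
    closure ((fun A => A (b n)) '' CstarGen {T1, T2}) =
      closure ((Submodule.span ℂ (b '' {m : ℕ+ | orbEquiv collatz m n}) : Submodule ℂ H) : Set H) := by
  have hT1' : ∀ m : ℕ+, T1 (b m) = if (m : ℕ) % 2 = 1 then b (collatz m) else 0 := fun m => by
    rw [hT1 m]
    split_ifs with h
    · rw [collatz_of_odd h]
    · rfl
  have hgen : ∀ s ∈ ({T1, T2} : Set (H →L[ℂ] H)),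
      MovesAlongOrbits b collatz s ∧ MovesAlongOrbits b collatz (star s) := by
    rintro s (rfl | rfl)
    · exact ⟨movesAlongOrbits_of_apply_eq_ite hT1', b.movesAlongOrbits_star hT1' collatz_injOn_odd⟩
    · exact ⟨movesAlongOrbits_of_apply_eq_ite hT2, b.movesAlongOrbits_star hT2 collatz_injOn_even⟩
  set S := NonUnitalStarAlgebra.adjoin ℂ ({T1, T2} : Set (H →L[ℂ] H))
  have hT1S : T1 ∈ S := NonUnitalStarAlgebra.subset_adjoin ℂ _ (by simp)
  have hT2S : T2 ∈ S := NonUnitalStarAlgebra.subset_adjoin ℂ _ (by simp)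
  have hfwd : ∃ A ∈ S, ∀ m, A (b m) = b (collatz m) := ⟨T1 + T2, add_mem hT1S hT2S, fun m => by
    rw [add_apply, hT1', hT2]
    rcases Nat.mod_two_eq_zero_or_one m with h | h <;> simp [h]⟩
  have hbwd : ∀ m, ∃ A ∈ S, A (b (collatz m)) = b m := fun m => by
    rcases Nat.mod_two_eq_zero_or_one m with h | h
    · exact ⟨star T2, star_mem hT2S, b.star_apply_eq_of_apply_eq_ite hT2 collatz_injOn_even h⟩
    · exact ⟨star T1, star_mem hT1S, b.star_apply_eq_of_apply_eq_ite hT1' collatz_injOn_odd h⟩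
  apply subset_antisymm
  · refine closure_minimal (image_subset_iff.2 fun A hA => ?_) isClosed_closure
    exact mapsTo_of_mem_cstarGen (isClosed_topologicalClosure _)
      (fun s hs => ⟨(hgen s hs).1.mapsTo_orbitSpan n, (hgen s hs).2.mapsTo_orbitSpan n⟩) hA
      (le_topologicalClosure _ (subset_span ⟨n, orbEquiv_refl _ _, rfl⟩))
  · have hspan : span ℂ (b '' {m | orbEquiv collatz m n}) ≤
        S.toNonUnitalSubalgebra.toSubmodule.map
          (ContinuousLinearMap.apply ℂ H (b n) : (H →L[ℂ] H) →ₗ[ℂ] H) :=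
      span_le.2 fun _ ⟨m, hm, hbm⟩ => hbm ▸ exists_mem_apply_eq_of_orbEquiv hfwd hbwd hm.symm
    refine closure_mono fun x hx => ?_
    obtain ⟨A, hA, rfl⟩ := hspan hx
    exact ⟨A, subset_closure hA, rfl⟩
end

section
/- Let f be the Collatz map, N1 = {n ∈ ℕ≥1 : n ≡ 1 or 5 (mod 6)}, N2 = {n ∈ ℕ≥1 : n ≡ 4 or 16 (mod 18)}, and P the first-return map of f on N1 ∪ N2 (which is defined on all of N1 ∪ N2). Then the restrictions P|_{N1} and P|_{N2} are injective, P(N1) = N2, and P(N2) = N1 ∪ N2. -/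
/-- `N₁ = {n : n ≡ 1, 5 (mod 6)}`. -/
def N1 : Set ℕ+ := {n : ℕ+ | (n : ℕ) % 6 = 1 ∨ (n : ℕ) % 6 = 5}

/-- `N₂ = {n : n ≡ 4, 16 (mod 18)}`. -/
def N2 : Set ℕ+ := {n : ℕ+ | (n : ℕ) % 18 = 4 ∨ (n : ℕ) % 18 = 16}

/-- `y` is the first return of `x` to `S` under iteration of `f`: for some `k ≥ 1`,
`y = f^[k] x ∈ S` and no earlier positive iterate of `x` lies in `S`. -/
def IsFirstReturn {X : Type*} (f : X → X) (S : Set X) (x y : X) : Prop :=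
  ∃ k : ℕ, 0 < k ∧ f^[k] x ∈ S ∧ y = f^[k] x ∧ ∀ j : ℕ, 0 < j → j < k → f^[j] x ∉ S

/-! On `N1` the first return is `f` itself, `n ↦ 3n + 1`, a bijection `N1 → N2`. Starting from
`N2`, the orbit runs through even numbers prime to `3` until it returns, so `f` only halves
along the way; halving is injective, and of two journeys reaching the same point the longer one
would pass through the start of the shorter one, which lies in `N1 ∪ N2`. Conversely, each
`z ∈ N1 ∪ N2` is the first return of `2 ^ k * z` for the least `k ≥ 1` with
`2 ^ k * z ∈ N2`; such `k` exists because `2` generates the units modulo `9`. -/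

namespace IsFirstReturn

variable {X : Type*} {f : X → X} {S : Set X}

lemma mem {x y : X} (h : IsFirstReturn f S x y) : y ∈ S := by
  obtain ⟨k, -, hk, rfl, -⟩ := h
  exact hk

lemma unique {x y y' : X} (h : IsFirstReturn f S x y) (h' : IsFirstReturn f S x y') :
    y = y' := by
  obtain ⟨k, hk, hkS, rfl, hkmin⟩ := h
  obtain ⟨m, hm, hmS, rfl, hmmin⟩ := h'
  rcases lt_trichotomy k m with hlt | rfl | hgt
  · exact absurd hkS (hmmin k hk hlt)
  · rfl
  · exact absurd hmS (hkmin m hm hgt)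

lemma of_apply_mem {x : X} (hx : f x ∈ S) : IsFirstReturn f S x (f x) :=
  ⟨1, one_pos, hx, rfl, fun _ hj hj1 => absurd hj1 (by omega)⟩

end IsFirstReturn

section FirstReturn

variable {X : Type*} {f : X → X} {S : Set X}

lemma injOn_iterate_of_injOn {A : Set X} (hf : Set.InjOn f A) (n : ℕ) :
    Set.InjOn f^[n] {x | ∀ j < n, f^[j] x ∈ A} := by
  induction n with
  | zero => intro x _ y _ h; exact h
  | succ n ih =>
    intro x hx y hy h
    have hfx : f x ∈ {x | ∀ j < n, f^[j] x ∈ A} := fun j hj => hx (j + 1) (by omega)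
    have hfy : f y ∈ {x | ∀ j < n, f^[j] x ∈ A} := fun j hj => hy (j + 1) (by omega)
    exact hf (hx 0 n.succ_pos) (hy 0 n.succ_pos) (ih hfx hfy h)

lemma iterate_mem_of_mapsTo {A : Set X} (hf : Set.MapsTo f A (A ∪ S)) {x : X} (hx : x ∈ A)
    {k : ℕ} (hS : ∀ j, 0 < j → j < k → f^[j] x ∉ S) : ∀ j < k, f^[j] x ∈ A := by
  intro j
  induction j with
  | zero => intro _; exact hx
  | succ j ih =>
    intro hj
    rw [Function.iterate_succ_apply']
    exact (hf (ih (by omega))).resolve_right (by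
      rw [← Function.iterate_succ_apply' f]; exact hS _ j.succ_pos hj)

lemma IsFirstReturn.inj {A : Set X} (hinj : Set.InjOn f A) (hf : Set.MapsTo f A (A ∪ S))
    {x y z : X} (hxA : x ∈ A) (hyA : y ∈ A) (hxS : x ∈ S) (hyS : y ∈ S)
    (hx : IsFirstReturn f S x z) (hy : IsFirstReturn f S y z) : x = y := by
  obtain ⟨k, hk, -, hkz, hkmin⟩ := hx
  obtain ⟨m, hm, -, hmz, hmmin⟩ := hy
  wlog hkm : k ≤ m generalizing x y k m
  · exact (this hyA hxA hyS hxS m hm hmz hmmin k hk hkz hkmin (by omega)).symm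
  -- Cancelling `f` along both journeys shows that the longer one passes through `x ∈ S`.
  have hxw : x = f^[m - k] y := by
    refine injOn_iterate_of_injOn hinj k (iterate_mem_of_mapsTo hf hxA hkmin) (fun j hj => ?_) ?_
    · rw [← Function.iterate_add_apply]
      exact iterate_mem_of_mapsTo hf hyA hmmin _ (by omega)
    · rw [← Function.iterate_add_apply, Nat.add_sub_cancel' hkm, ← hkz, hmz]
  obtain hmk | hmk := Nat.eq_zero_or_pos (m - k)
  · rwa [hmk] at hxw
  · exact (hmmin _ hmk (by omega) (hxw ▸ hxS)).elim

lemma isFirstReturn_of_leftInverse {g : X → X} (hg : Function.LeftInverse f g) {z : X}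
    {k : ℕ} (hk : 0 < k) (hz : z ∈ S) (hS : ∀ j, 0 < j → j < k → g^[j] z ∉ S) :
    IsFirstReturn f S (g^[k] z) z := by
  have hfg : ∀ j ≤ k, f^[j] (g^[k] z) = g^[k - j] z := fun j hj => by
    rw [← Nat.add_sub_cancel' hj, Function.iterate_add_apply, (hg.iterate j).eq,
      Nat.add_sub_cancel_left]
  refine ⟨k, hk, ?_, ?_, fun j hj hjk => ?_⟩
  · rwa [hfg k le_rfl, Nat.sub_self]
  · rw [hfg k le_rfl, Nat.sub_self]; rfl
  · rw [hfg j hjk.le]; exact hS _ (by omega) (by omega)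

lemma exists_isFirstReturn_of_leftInverse {g : X → X} (hg : Function.LeftInverse f g)
    {z : X} (hz : z ∈ S) (h : ∃ k, g^[k + 1] z ∈ S) :
    ∃ k, g^[k + 1] z ∈ S ∧ IsFirstReturn f S (g^[k + 1] z) z := by
  classical
  refine ⟨Nat.find h, Nat.find_spec h,
    isFirstReturn_of_leftInverse hg (Nat.succ_pos _) hz fun j hj hjk => ?_⟩
  obtain ⟨i, rfl⟩ := Nat.exists_eq_add_one_of_ne_zero hj.ne'
  exact Nat.find_min h (by omega)

end FirstReturn

lemma coe_collatz (n : ℕ+) :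
    (collatz n : ℕ) = if (n : ℕ) % 2 = 1 then 3 * (n : ℕ) + 1 else (n : ℕ) / 2 := by
  by_cases h : (n : ℕ) % 2 = 1 <;> simp [collatz, h]

lemma collatz_two_mul (n : ℕ+) : collatz (2 * n) = n := by
  apply PNat.coe_injective
  rw [coe_collatz]
  simp

lemma collatz_mem_N2 {n : ℕ+} (hn : n ∈ N1) : collatz n ∈ N2 := by
  simp only [N1, N2, Set.mem_ofPred_eq, coe_collatz] at hn ⊢
  split_ifs <;> omega

lemma collatz_image_N1 : collatz '' N1 = N2 := by
  refine subset_antisymm (Set.image_subset_iff.2 fun _ => collatz_mem_N2) fun n hn => ?_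
  simp only [N2, Set.mem_ofPred_eq] at hn
  obtain ⟨m, hm⟩ : ∃ m : ℕ+, (m : ℕ) = ((n : ℕ) - 1) / 3 := ⟨⟨_, by omega⟩, rfl⟩
  have hmN1 : m ∈ N1 := by
    simp only [N1, Set.mem_ofPred_eq, hm]
    omega
  refine ⟨m, hmN1, PNat.coe_injective ?_⟩
  rw [coe_collatz, if_pos (by omega)]
  omega

lemma injOn_collatz_N1 : Set.InjOn collatz N1 := by
  intro x hx y hy h
  have h' := congrArg ((↑) : ℕ+ → ℕ) h
  simp only [N1, Set.mem_ofPred_eq] at hx hy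
  rw [coe_collatz, coe_collatz, if_pos (by omega), if_pos (by omega)] at h'
  exact PNat.coe_injective (by omega)

def evenPrimeToThree : Set ℕ+ := {n | (n : ℕ) % 6 = 2 ∨ (n : ℕ) % 6 = 4}

lemma N2_subset_evenPrimeToThree : N2 ⊆ evenPrimeToThree := by
  intro n hn
  simp only [N2, evenPrimeToThree, Set.mem_ofPred_eq] at hn ⊢
  omega

lemma injOn_collatz_evenPrimeToThree : Set.InjOn collatz evenPrimeToThree := by
  intro x hx y hy h
  have h' := congrArg ((↑) : ℕ+ → ℕ) h
  simp only [evenPrimeToThree, Set.mem_ofPred_eq] at hx hy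
  rw [coe_collatz, coe_collatz, if_neg (by omega), if_neg (by omega)] at h'
  exact PNat.coe_injective (by omega)

lemma mapsTo_collatz_evenPrimeToThree :
    Set.MapsTo collatz evenPrimeToThree (evenPrimeToThree ∪ (N1 ∪ N2)) := by
  intro n hn
  simp only [evenPrimeToThree, N1, N2, Set.mem_union, Set.mem_ofPred_eq, coe_collatz] at hn ⊢
  split_ifs <;> omega

-- `2` generates the units modulo `9`.
lemma exists_two_pow_mul_mem_N2 {z : ℕ+} (hz : z ∈ N1 ∪ N2) :
    ∃ k, (2 * ·)^[k + 1] z ∈ N2 := by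
  have hz3 : (z : ℕ) % 9 % 3 ≠ 0 := by
    simp only [N1, N2, Set.mem_union, Set.mem_ofPred_eq] at hz
    omega
  obtain ⟨k, -, hk⟩ : ∃ k < 6, 2 ^ (k + 1) * ((z : ℕ) % 9) % 9 = 4 := by
    have : ∀ r < 9, r % 3 ≠ 0 → ∃ k < 6, 2 ^ (k + 1) * r % 9 = 4 := by decide
    exact this _ (Nat.mod_lt _ (by norm_num)) hz3
  refine ⟨k, Or.inl ?_⟩
  rw [Nat.mul_mod_mod] at hk
  rw [mul_left_iterate, PNat.mul_coe, PNat.pow_coe, PNat.val_ofNat]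
  rw [pow_succ, mul_comm _ 2, mul_assoc] at hk ⊢
  omega

lemma mem_N2_of_two_mul_mem {n : ℕ+} (h : 2 * n ∈ N1 ∪ N2) : 2 * n ∈ N2 := by
  simp only [N1, N2, Set.mem_union, Set.mem_ofPred_eq, PNat.mul_coe, PNat.val_ofNat] at h ⊢
  omega

/-- The first-return map `P` of the Collatz map on `N₁ ∪ N₂` is injective on `N₁` and on
`N₂`, with `P(N₁) = N₂` and `P(N₂) = N₁ ∪ N₂`. -/
theorem firstReturn_inj_surj (P : ℕ+ → ℕ+)
    (hP : ∀ x ∈ N1 ∪ N2, IsFirstReturn collatz (N1 ∪ N2) x (P x)) :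
    Set.InjOn P N1 ∧ Set.InjOn P N2 ∧ P '' N1 = N2 ∧ P '' N2 = N1 ∪ N2 := by
  have hP1 : Set.EqOn collatz P N1 := fun x hx =>
    (IsFirstReturn.of_apply_mem (S := N1 ∪ N2) (Or.inr (collatz_mem_N2 hx))).unique
      (hP x (Or.inl hx))
  have hP2 : N1 ∪ N2 ⊆ P '' N2 := by
    intro z hz
    obtain ⟨k, hxS, hx⟩ := exists_isFirstReturn_of_leftInverse collatz_two_mul hz
      ((exists_two_pow_mul_mem_N2 hz).imp fun _ => Or.inr)
    rw [Function.iterate_succ_apply'] at hxS hx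
    have hxN2 := mem_N2_of_two_mul_mem hxS
    exact ⟨_, hxN2, (hP _ (Or.inr hxN2)).unique hx⟩
  refine ⟨injOn_collatz_N1.congr hP1, fun x hx y hy hxy => ?_, hP1.image_eq ▸ collatz_image_N1,
    subset_antisymm ?_ hP2⟩
  · exact IsFirstReturn.inj injOn_collatz_evenPrimeToThree mapsTo_collatz_evenPrimeToThree
      (N2_subset_evenPrimeToThree hx) (N2_subset_evenPrimeToThree hy) (Or.inr hx) (Or.inr hy)
      (hP x (Or.inr hx)) (hxy ▸ hP y (Or.inr hy))
  · rintro _ ⟨x, hx, rfl⟩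
    exact (hP x (Or.inr hx)).mem
end

section
/- Let P be the first-return map of the Collatz map on N1 ∪ N2, H a complex Hilbert space with orthonormal basis {e_n}_{n ∈ N1∪N2}, T1, T2 the bounded operators with T1 e_n = e_{P(n)} for n ∈ N1, T1 e_n = 0 for n ∈ N2, T2 e_n = e_{P(n)} for n ∈ N2, T2 e_n = 0 for n ∈ N1, and set S1 = T1*T2*, S2 = T2*. Then C*(S1,S2) = C*(T1,T2), S1 and S2 are isometries, S1 S1* + S2 S2* = I, and S1* S2 = 0 = S2* S1 (so S1, S2 satisfy the Cuntz O_2 relations). -/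
/-!
On `N1` the first return is `n ↦ 3n + 1`, a bijection `N1 → N2`. From `x ∈ N2` the orbit only
halves until it returns, so the first return of `x = 2 ^ k * m` is `m`, where `k ≥ 1` is least
with `2 ^ k * m ∈ N2`; such `k` exists for every `m ∈ N1 ∪ N2` since `2` generates `(ZMod 9)ˣ`.
Hence `P` is a bijection `N2 → N1 ∪ N2`. So `T1` shifts the basis of `span N1` onto that of
`span N2`, `T2` that of `span N2` onto the whole basis, and every relation, as well as
`T1 = S2 S1*`, is checked on basis vectors.
-/

theorem IsFirstReturn.unique_s11 {X : Type*} {f : X → X} {S : Set X} {x y z : X}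
    (hy : IsFirstReturn f S x y) (hz : IsFirstReturn f S x z) : y = z := by
  obtain ⟨k, hk, hkS, rfl, hkmin⟩ := hy
  obtain ⟨l, hl, hlS, rfl, hlmin⟩ := hz
  rcases lt_trichotomy k l with h | rfl | h
  · exact absurd hkS (hlmin k hk h)
  · rfl
  · exact absurd hlS (hkmin l hl h)

namespace Collatz

theorem collatz_of_odd {n : ℕ+} (h : (n : ℕ) % 2 = 1) : collatz n = 3 * n + 1 := dif_pos h

theorem two_mul_collatz_of_even {n : ℕ+} (h : (n : ℕ) % 2 = 0) : 2 * collatz n = n := by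
  have hc : ((collatz n : ℕ+) : ℕ) = n / 2 := by
    simp [collatz, show ¬ (n : ℕ) % 2 = 1 by omega]
  apply PNat.eq
  rw [PNat.mul_coe, hc, PNat.val_ofNat]
  omega

theorem collatz_two_mul (n : ℕ+) : collatz (2 * n) = n :=
  mul_left_cancel (two_mul_collatz_of_even (by simp))

theorem collatz_iterate_two_pow_mul (j : ℕ) (n : ℕ+) : collatz^[j] (2 ^ j * n) = n := by
  induction j generalizing n with
  | zero => simp
  | succ j ih => rw [pow_succ', mul_assoc, Function.iterate_succ_apply, collatz_two_mul, ih]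

theorem odd_of_mem_N1 {n : ℕ+} (h : n ∈ N1) : (n : ℕ) % 2 = 1 := by
  rcases h with h | h <;> omega

theorem even_of_mem_N2 {n : ℕ+} (h : n ∈ N2) : (n : ℕ) % 2 = 0 := by
  rcases h with h | h <;> omega

theorem not_three_dvd_of_mem_N2 {n : ℕ+} (h : n ∈ N2) : ¬ 3 ∣ (n : ℕ) := by
  rcases h with h | h <;> omega

theorem mem_N1_of_odd {n : ℕ+} (h2 : (n : ℕ) % 2 = 1) (h3 : ¬ 3 ∣ (n : ℕ)) : n ∈ N1 := by
  change _ ∨ _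
  omega

theorem three_mul_add_one_mem_N2 {n : ℕ+} (h : n ∈ N1) : 3 * n + 1 ∈ N2 := by
  change _ ∨ _
  simp only [PNat.add_coe, PNat.mul_coe, PNat.val_ofNat]
  rcases h with h | h <;> omega

theorem exists_three_mul_add_one_eq {m : ℕ+} (h : m ∈ N2) : ∃ n ∈ N1, 3 * n + 1 = m := by
  have h18 : (m : ℕ) % 18 = 4 ∨ (m : ℕ) % 18 = 16 := h
  refine ⟨⟨((m : ℕ) - 1) / 3, by omega⟩, ?_, PNat.eq ?_⟩
  · change _ ∨ _
    simp only [PNat.mk_coe]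
    omega
  · change 3 * (((m : ℕ) - 1) / 3) + 1 = m
    omega

theorem two_pow_mul_notMem_N1 {j : ℕ} (hj : 0 < j) (n : ℕ+) : 2 ^ j * n ∉ N1 := by
  intro h
  have h2 := odd_of_mem_N1 h
  rw [PNat.mul_coe, PNat.pow_coe, ← Nat.succ_pred_eq_of_pos hj, pow_succ] at h2
  simp [Nat.mul_assoc, Nat.mul_mod] at h2

theorem isFirstReturn_of_mem_N1 {x : ℕ+} (hx : x ∈ N1) :
    IsFirstReturn collatz (N1 ∪ N2) x (3 * x + 1) := by
  have hstep : collatz^[1] x = 3 * x + 1 := collatz_of_odd (odd_of_mem_N1 hx)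
  exact ⟨1, one_pos, hstep ▸ Or.inr (three_mul_add_one_mem_N2 hx), hstep.symm,
    fun j hj hj1 => absurd hj1 (by omega)⟩

theorem eq_two_pow_mul_of_isFirstReturn {x y : ℕ+} (hx : x ∈ N2)
    (h : IsFirstReturn collatz (N1 ∪ N2) x y) :
    ∃ k, 0 < k ∧ x = 2 ^ k * y ∧ ∀ j, 0 < j → j < k → 2 ^ j * y ∉ N2 := by
  obtain ⟨k, hk, -, rfl, hmin⟩ := h
  -- Before the first return every iterate is even: an odd one would lie in `N1`, since
  -- `x ≡ 1 (mod 3)` makes all `x / 2 ^ j` prime to `3`.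
  have hhalve : ∀ j ≤ k, x = 2 ^ j * collatz^[j] x := by
    intro j hj
    induction j with
    | zero => simp
    | succ j ih =>
      have hxz := ih (by omega)
      have heven : ((collatz^[j] x : ℕ+) : ℕ) % 2 = 0 := by
        by_contra hodd
        have h3 : ¬ 3 ∣ ((collatz^[j] x : ℕ+) : ℕ) := fun h3 =>
          not_three_dvd_of_mem_N2 hx (hxz ▸ by simpa using h3.mul_left _)
        rcases j.eq_zero_or_pos with rfl | hj0
        · exact hodd (even_of_mem_N2 hx)
        · exact hmin j hj0 (by omega) (Or.inl (mem_N1_of_odd (by omega) h3))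
      rw [Function.iterate_succ_apply', pow_succ, mul_assoc, two_mul_collatz_of_even heven, ← hxz]
  refine ⟨k, hk, hhalve k le_rfl, fun j hj hjk hjN2 => hmin (k - j) (by omega) (by omega) ?_⟩
  have hsplit : x = 2 ^ (k - j) * (2 ^ j * collatz^[k] x) := by
    rw [← mul_assoc, ← pow_add, Nat.sub_add_cancel hjk.le, ← hhalve k le_rfl]
  rw [hsplit, collatz_iterate_two_pow_mul]
  exact Or.inr hjN2

theorem isFirstReturn_two_pow_mul {y : ℕ+} {k : ℕ} (hk : 0 < k) (hy : y ∈ N1 ∪ N2)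
    (hmin : ∀ j, 0 < j → j < k → 2 ^ j * y ∉ N2) :
    IsFirstReturn collatz (N1 ∪ N2) (2 ^ k * y) y := by
  have hiter : ∀ j ≤ k, collatz^[j] (2 ^ k * y) = 2 ^ (k - j) * y := fun j hj => by
    rw [← collatz_iterate_two_pow_mul j (2 ^ (k - j) * y), ← mul_assoc, ← pow_add,
      Nat.add_sub_cancel' hj]
  have hk' : collatz^[k] (2 ^ k * y) = y := by simpa using hiter k le_rfl
  refine ⟨k, hk, by rwa [hk'], hk'.symm, fun j hj hjk => ?_⟩
  rw [hiter j hjk.le]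
  rintro (hN1 | hN2)
  · exact two_pow_mul_notMem_N1 (by omega) y hN1
  · exact hmin (k - j) (by omega) (by omega) hN2

theorem exists_two_pow_mul_mem_N2 {m : ℕ+} (hm : m ∈ N1 ∪ N2) : ∃ j, 0 < j ∧ 2 ^ j * m ∈ N2 := by
  suffices ∃ j, 0 < j ∧ ((2 ^ j * m : ℕ) % 18 = 4 ∨ (2 ^ j * m : ℕ) % 18 = 16) by
    simpa only [N2, Set.mem_ofPred_eq, PNat.mul_coe, PNat.pow_coe, PNat.val_ofNat] using this
  have h3 : (m : ℕ) % 3 ≠ 0 := by rcases hm with (h | h) | (h | h) <;> omega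
  have h9 : (m : ℕ) % 9 = 1 ∨ (m : ℕ) % 9 = 2 ∨ (m : ℕ) % 9 = 4 ∨ (m : ℕ) % 9 = 5 ∨
      (m : ℕ) % 9 = 7 ∨ (m : ℕ) % 9 = 8 := by omega
  -- In each case `2 ^ j * m ≡ 4` or `7 (mod 9)`.
  rcases h9 with h | h | h | h | h | h
  exacts [⟨2, by omega⟩, ⟨1, by omega⟩, ⟨2, by omega⟩, ⟨3, by omega⟩, ⟨4, by omega⟩,
    ⟨1, by omega⟩]

theorem exists_mem_N2_isFirstReturn {m : ℕ+} (hm : m ∈ N1 ∪ N2) :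
    ∃ x ∈ N2, IsFirstReturn collatz (N1 ∪ N2) x m := by
  classical
  have hex := exists_two_pow_mul_mem_N2 hm
  obtain ⟨hk, hkN2⟩ := Nat.find_spec hex
  exact ⟨_, hkN2, isFirstReturn_two_pow_mul hk hm fun j hj hjk hjN2 =>
    Nat.find_min hex hjk ⟨hj, hjN2⟩⟩

theorem mem_compl_preimage_N1 (x : ↥(N1 ∪ N2)) :
    x ∈ (Subtype.val ⁻¹' N1)ᶜ ↔ (x : ℕ+) ∈ N2 := by
  refine ⟨fun hx => x.2.resolve_left hx, fun hx hx1 => ?_⟩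
  have := odd_of_mem_N1 hx1
  have := even_of_mem_N2 hx
  omega

variable {P : ↥(N1 ∪ N2) → ↥(N1 ∪ N2)}

theorem firstReturn_of_mem_N1
    (hP : ∀ x : ↥(N1 ∪ N2), IsFirstReturn collatz (N1 ∪ N2) ↑x ↑(P x)) {x : ↥(N1 ∪ N2)}
    (hx : (x : ℕ+) ∈ N1) :
    (P x : ℕ+) = 3 * x + 1 :=
  (hP x).unique_s11 (isFirstReturn_of_mem_N1 hx)

theorem bijOn_firstReturn_N1
    (hP : ∀ x : ↥(N1 ∪ N2), IsFirstReturn collatz (N1 ∪ N2) ↑x ↑(P x)) :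
    Set.BijOn P (Subtype.val ⁻¹' N1) (Subtype.val ⁻¹' N1)ᶜ := by
  refine ⟨fun x hx => ?_, fun x hx y hy hxy => ?_, fun m hm => ?_⟩
  · rw [mem_compl_preimage_N1, firstReturn_of_mem_N1 hP hx]
    exact three_mul_add_one_mem_N2 hx
  · have h := congrArg Subtype.val hxy
    rw [firstReturn_of_mem_N1 hP hx, firstReturn_of_mem_N1 hP hy] at h
    exact Subtype.ext (mul_left_cancel (add_right_cancel h))
  · obtain ⟨n, hn, hnm⟩ := exists_three_mul_add_one_eq ((mem_compl_preimage_N1 m).1 hm)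
    exact ⟨⟨n, Or.inl hn⟩, hn, Subtype.ext ((firstReturn_of_mem_N1 hP hn).trans hnm)⟩

theorem bijOn_firstReturn_N2
    (hP : ∀ x : ↥(N1 ∪ N2), IsFirstReturn collatz (N1 ∪ N2) ↑x ↑(P x)) :
    Set.BijOn P (Subtype.val ⁻¹' N1)ᶜ Set.univ := by
  refine ⟨Set.mapsTo_univ _ _, fun x hx y hy hxy => ?_, fun m _ => ?_⟩
  · rw [mem_compl_preimage_N1] at hx hy
    obtain ⟨k, hk, hxk, hkmin⟩ := eq_two_pow_mul_of_isFirstReturn hx (hP x)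
    obtain ⟨l, hl, hyl, hlmin⟩ := eq_two_pow_mul_of_isFirstReturn hy (hP y)
    rw [hxy] at hxk hkmin
    rcases lt_trichotomy k l with hkl | rfl | hkl
    · exact absurd (hxk ▸ hx) (hlmin k hk hkl)
    · exact Subtype.ext (hxk.trans hyl.symm)
    · exact absurd (hyl ▸ hy) (hkmin l hl hkl)
  · obtain ⟨x, hx, hxm⟩ := exists_mem_N2_isFirstReturn m.2
    refine ⟨⟨x, Or.inr hx⟩, (mem_compl_preimage_N1 _).2 hx, Subtype.ext ?_⟩
    exact (hP _).unique_s11 hxm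

end Collatz

section PartialShift

open ContinuousLinearMap Set
open scoped InnerProductSpace

variable {𝕜 H ι : Type*} [RCLike 𝕜] [NormedAddCommGroup H] [InnerProductSpace 𝕜 H]

theorem HilbertBasis.ext_inner_left (b : HilbertBasis ι 𝕜 H) {x y : H}
    (h : ∀ i, ⟪b i, x⟫_𝕜 = ⟪b i, y⟫_𝕜) : x = y :=
  b.repr.injective <| lp.ext <| funext fun i => by simp only [b.repr_apply_apply, h]

theorem HilbertBasis.continuousLinearMap_ext {F : Type*} [NormedAddCommGroup F]
    [NormedSpace 𝕜 F] (b : HilbertBasis ι 𝕜 H) {A B : H →L[𝕜] F}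
    (h : ∀ i, A (b i) = B (b i)) : A = B :=
  ext_on (Submodule.dense_iff_topologicalClosure_eq_top.2 b.dense_span) (forall_mem_range.2 h)

structure IsPartialShift (b : HilbertBasis ι 𝕜 H) (σ : ι → ι) (A : Set ι) (T : H →L[𝕜] H) :
    Prop where
  apply_of_mem : ∀ i ∈ A, T (b i) = b (σ i)
  apply_of_notMem : ∀ i ∉ A, T (b i) = 0

namespace IsPartialShift

variable [CompleteSpace H] {b : HilbertBasis ι 𝕜 H} {σ : ι → ι} {A : Set ι} {T : H →L[𝕜] H}

theorem adjoint_apply (hT : IsPartialShift b σ A T) (hσ : A.InjOn σ) {i : ι} (hi : i ∈ A) :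
    adjoint T (b (σ i)) = b i := by
  classical
  have hb := orthonormal_iff_ite.1 b.orthonormal
  refine b.ext_inner_left fun j => ?_
  rw [adjoint_inner_right, hb]
  by_cases hj : j ∈ A
  · rw [hT.apply_of_mem j hj, hb]
    exact if_congr (hσ.eq_iff hj hi) rfl rfl
  · rw [hT.apply_of_notMem j hj, inner_zero_left, if_neg (ne_of_mem_of_not_mem hi hj).symm]

theorem adjoint_apply_apply (hT : IsPartialShift b σ A T) (hσ : A.InjOn σ) {i : ι} (hi : i ∈ A) :
    adjoint T (T (b i)) = b i := by
  rw [hT.apply_of_mem i hi, hT.adjoint_apply hσ hi]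

theorem mul_adjoint_eq_one (hT : IsPartialShift b σ A T) (hσ : A.BijOn σ univ) :
    T * adjoint T = 1 := by
  refine b.continuousLinearMap_ext fun m => ?_
  obtain ⟨n, hn, rfl⟩ := hσ.surjOn (mem_univ m)
  rw [mul_apply_eq_comp, one_apply_eq_self, hT.adjoint_apply hσ.injOn hn, hT.apply_of_mem n hn]

variable {P : ι → ι} {T1 T2 : H →L[𝕜] H}

theorem mul_mul_adjoint_mul_adjoint_eq_one (hA : A.BijOn P Aᶜ) (hAc : Aᶜ.BijOn P univ)
    (hT1 : IsPartialShift b P A T1) (hT2 : IsPartialShift b P Aᶜ T2) :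
    T2 * T1 * (adjoint T1 * adjoint T2) = 1 := by
  refine b.continuousLinearMap_ext fun m => ?_
  obtain ⟨n, hn, rfl⟩ := hAc.surjOn (mem_univ m)
  obtain ⟨r, hr, rfl⟩ := hA.surjOn hn
  simp only [mul_apply_eq_comp, one_apply_eq_self]
  rw [hT2.adjoint_apply hAc.injOn hn, hT1.adjoint_apply hA.injOn hr, hT1.apply_of_mem r hr,
    hT2.apply_of_mem _ hn]

theorem adjoint_mul_adjoint_mul_mul_add_adjoint_mul_self_eq_one (hA : A.BijOn P Aᶜ)
    (hAc : Aᶜ.BijOn P univ) (hT1 : IsPartialShift b P A T1) (hT2 : IsPartialShift b P Aᶜ T2) :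
    adjoint T1 * adjoint T2 * (T2 * T1) + adjoint T2 * T2 = 1 := by
  refine b.continuousLinearMap_ext fun i => ?_
  simp only [add_apply, mul_apply_eq_comp, one_apply_eq_self]
  by_cases hi : i ∈ A
  · have hPi : P i ∈ Aᶜ := hA.mapsTo hi
    rw [hT1.apply_of_mem i hi, hT2.adjoint_apply_apply hAc.injOn hPi,
      hT1.adjoint_apply hA.injOn hi, hT2.apply_of_notMem i (not_not_intro hi), map_zero, add_zero]
  · rw [hT1.apply_of_notMem i hi, map_zero, map_zero, map_zero, zero_add,
      hT2.adjoint_apply_apply hAc.injOn hi]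

theorem mul_mul_adjoint_eq_zero (hAc : Aᶜ.BijOn P univ)
    (hT1 : IsPartialShift b P A T1) (hT2 : IsPartialShift b P Aᶜ T2) :
    T2 * T1 * adjoint T2 = 0 := by
  refine b.continuousLinearMap_ext fun m => ?_
  obtain ⟨n, hn, rfl⟩ := hAc.surjOn (mem_univ m)
  simp only [mul_apply_eq_comp, zero_apply]
  rw [hT2.adjoint_apply hAc.injOn hn, hT1.apply_of_notMem n hn, map_zero]

theorem mul_adjoint_mul_adjoint_eq_zero (hA : A.BijOn P Aᶜ) (hAc : Aᶜ.BijOn P univ)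
    (hT1 : IsPartialShift b P A T1) (hT2 : IsPartialShift b P Aᶜ T2) :
    T2 * (adjoint T1 * adjoint T2) = 0 := by
  refine b.continuousLinearMap_ext fun m => ?_
  obtain ⟨n, hn, rfl⟩ := hAc.surjOn (mem_univ m)
  obtain ⟨r, hr, rfl⟩ := hA.surjOn hn
  simp only [mul_apply_eq_comp, zero_apply]
  rw [hT2.adjoint_apply hAc.injOn hn, hT1.adjoint_apply hA.injOn hr,
    hT2.apply_of_notMem r (not_not_intro hr)]

theorem adjoint_mul_self_mul_eq (hA : A.BijOn P Aᶜ) (hAc : Aᶜ.BijOn P univ)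
    (hT1 : IsPartialShift b P A T1) (hT2 : IsPartialShift b P Aᶜ T2) :
    adjoint T2 * T2 * T1 = T1 := by
  refine b.continuousLinearMap_ext fun i => ?_
  simp only [mul_apply_eq_comp]
  by_cases hi : i ∈ A
  · rw [hT1.apply_of_mem i hi, hT2.adjoint_apply_apply hAc.injOn (hA.mapsTo hi)]
  · rw [hT1.apply_of_notMem i hi, map_zero, map_zero]

end IsPartialShift

end PartialShift

open NonUnitalStarAlgebra in
theorem NonUnitalStarAlgebra.adjoin_pair_star_mul_star {R A : Type*} [CommSemiring R] [StarRing R]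
    [NonUnitalSemiring A] [StarRing A] [Module R A] [IsScalarTower R A A] [SMulCommClass R A A]
    [StarModule R A] {a b : A} (h : star b * b * a = a) :
    adjoin R {star a * star b, star b} = adjoin R {a, b} := by
  have hS1 : star a * star b ∈ adjoin R {star a * star b, star b} := mem_adjoin_of_mem R (by simp)
  have hS2 : star b ∈ adjoin R {star a * star b, star b} := mem_adjoin_of_mem R (by simp)
  have hT1 : a ∈ adjoin R {a, b} := mem_adjoin_of_mem R (by simp)
  have hT2 : b ∈ adjoin R {a, b} := mem_adjoin_of_mem R (by simp)
  refine le_antisymm (adjoin_le (Set.pair_subset ?_ ?_)) (adjoin_le (Set.pair_subset ?_ ?_))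
  · exact mul_mem (star_mem hT1) (star_mem hT2)
  · exact star_mem hT2
  · have ha : star b * star (star a * star b) = a := by
      rw [star_mul, star_star, star_star, ← mul_assoc, h]
    simpa only [ha, SetLike.mem_coe] using mul_mem hS2 (star_mem hS1)
  · simpa only [star_star, SetLike.mem_coe] using star_mem hS2

open ContinuousLinearMap Collatz IsPartialShift in
/-- `C*(S₁,S₂) = C*(T₁,T₂)`, `S₁, S₂` are isometries, `S₁S₁* + S₂S₂* = 1` and
`S₁*S₂ = 0 = S₂*S₁`: the Cuntz `O₂` relations. -/
theorem cuntz_relations {H : Type*} [NormedAddCommGroup H] [InnerProductSpace ℂ H]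
    [CompleteSpace H] (b : HilbertBasis ↥(N1 ∪ N2) ℂ H)
    (P : ↥(N1 ∪ N2) → ↥(N1 ∪ N2))
    (hP : ∀ x : ↥(N1 ∪ N2), IsFirstReturn collatz (N1 ∪ N2) ↑x ↑(P x))
    (T1 T2 : H →L[ℂ] H)
    (hT1 : ∀ x : ↥(N1 ∪ N2), ((x : ℕ+) ∈ N1 → T1 (b x) = b (P x)) ∧
      ((x : ℕ+) ∈ N2 → T1 (b x) = 0))
    (hT2 : ∀ x : ↥(N1 ∪ N2), ((x : ℕ+) ∈ N2 → T2 (b x) = b (P x)) ∧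
      ((x : ℕ+) ∈ N1 → T2 (b x) = 0))
    (S1 S2 : H →L[ℂ] H)
    (hS1 : S1 = ContinuousLinearMap.adjoint T1 * ContinuousLinearMap.adjoint T2)
    (hS2 : S2 = ContinuousLinearMap.adjoint T2) :
    CstarGen {S1, S2} = CstarGen {T1, T2} ∧
      (∀ v : H, ‖S1 v‖ = ‖v‖) ∧ (∀ v : H, ‖S2 v‖ = ‖v‖) ∧
      S1 * ContinuousLinearMap.adjoint S1 + S2 * ContinuousLinearMap.adjoint S2 = 1 ∧
      ContinuousLinearMap.adjoint S1 * S2 = 0 ∧ ContinuousLinearMap.adjoint S2 * S1 = 0 := by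
  have hA := bijOn_firstReturn_N1 hP
  have hAc := bijOn_firstReturn_N2 hP
  have hT1' : IsPartialShift b P (Subtype.val ⁻¹' N1) T1 :=
    ⟨fun i hi => (hT1 i).1 hi, fun i hi => (hT1 i).2 ((mem_compl_preimage_N1 i).1 hi)⟩
  have hT2' : IsPartialShift b P (Subtype.val ⁻¹' N1)ᶜ T2 :=
    ⟨fun i hi => (hT2 i).1 ((mem_compl_preimage_N1 i).1 hi), fun i hi => (hT2 i).2 (not_not.1 hi)⟩
  have hS1adj : adjoint S1 = T2 * T1 := by
    simp only [hS1, ← star_eq_adjoint, star_mul, star_star]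
  have hS2adj : adjoint S2 = T2 := by rw [hS2, adjoint_adjoint]
  refine ⟨?_, (norm_map_iff_adjoint_comp_self S1).2 ?_, (norm_map_iff_adjoint_comp_self S2).2 ?_,
    ?_, ?_, ?_⟩
  · have hT1eq : star T2 * T2 * T1 = T1 := adjoint_mul_self_mul_eq hA hAc hT1' hT2'
    simp only [CstarGen, hS1, hS2, ← star_eq_adjoint,
      NonUnitalStarAlgebra.adjoin_pair_star_mul_star hT1eq]
  · rw [← mul_def, hS1adj, hS1]
    exact mul_mul_adjoint_mul_adjoint_eq_one hA hAc hT1' hT2'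
  · rw [← mul_def, hS2adj, hS2]
    exact hT2'.mul_adjoint_eq_one hAc
  · rw [hS1adj, hS2adj, hS1, hS2]
    exact adjoint_mul_adjoint_mul_mul_add_adjoint_mul_self_eq_one hA hAc hT1' hT2'
  · rw [hS1adj, hS2]
    exact mul_mul_adjoint_eq_zero hAc hT1' hT2'
  · rw [hS2adj, hS1]
    exact mul_adjoint_mul_adjoint_eq_zero hA hAc hT1' hT2'
end
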